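/- arXiv:math/0211085 — 2 statements merged into one kernel-verified Lean document; each statement's English description precedes it below -/
import Mathlib

section
/- Let R₀ be a polynomial ring in countably many variables over ℤ[1/2], and let η : R₀ → A₀ be a ring homomorphism where A₀ is a field of characteristic ≠ 2. Then there exists a multiplicative subset S ⊆ R₀ and a regular sequence in S⁻¹R₀ whose quotient K is a subfield of A₀ containing the image of η, such that A₀ is a free module over K. In particular A₀ is a free module over a localised regular quotient of R₀. -/
/-!
Let `p = ker η` in `R = D[X₀, X₁, …]`, where `D = ℤ[1/2]` is a principal ideal domain.
Substituting `η Xᵢ` for the first `n` variables maps `R` to a polynomial ring over the subfield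
`Fₙ ⊆ A₀` generated by the images of the polynomials in those variables; the kernels of these maps
form an increasing chain of primes with union `p`. Passing from `n` to `n + 1` substitutes only
`η Xₙ`, whose relations over `Fₙ` form a principal ideal of `Fₙ[Xₙ]` (at the start, the kernel of
`D → A₀` is principal in `D`). Clearing the denominators of its generator gives `gₙ ∈ R` such that,
in `R_p`, each prime of the chain is the previous one plus `(gₙ)`. Dropping the `gₙ` that already
lie in the previous prime leaves a sequence of length at most `ω` whose terms are nonzero, hence
regular, modulo the prime generated by their predecessors. It generates `p R_p`, so the quotient
is the residue field of `R_p`, which embeds into `A₀`, and `A₀` is free over it as over any field.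
-/

def IsRegularOrdSeq {A : Type*} [CommRing A] (lam : Ordinal) (x : Ordinal → A) : Prop :=
  ∀ α < lam, Ideal.Quotient.mk (Ideal.span (x '' {β | β < α})) (x α) ∈
    nonZeroDivisors (A ⧸ Ideal.span (x '' {β | β < α}))

open Ordinal in
theorem Ordinal.setOf_lt_eq_image_natCast {o : Ordinal} (ho : o ≤ ω) :
    {α | α < o} = Nat.cast '' {k : ℕ | (k : Ordinal) < o} := by
  ext α
  refine ⟨fun hα => ?_, fun ⟨k, hk, hα⟩ => hα ▸ hk⟩
  obtain ⟨k, rfl⟩ := Ordinal.lt_omega0.1 (hα.trans_le ho)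
  exact ⟨k, hα, rfl⟩

namespace Nat

variable {p : ℕ → Prop}

theorem image_nth_Iio {k : ℕ} (hk : ∀ hf : (Set.ofPred p).Finite, k < hf.toFinset.card) :
    nth p '' Set.Iio k = {j | j < nth p k ∧ p j} := by
  classical
  ext j
  constructor
  · rintro ⟨i, hik, rfl⟩
    exact ⟨nth_lt_nth' hik hk, nth_mem i fun hf => hik.trans (hk hf)⟩
  · rintro ⟨hlt, hj⟩
    refine ⟨count p j, ?_, nth_count hj⟩
    simpa only [Set.mem_Iio, count_nth hk] using count_strict_mono hj hlt

theorem image_nth_setOf_lt_card :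
    nth p '' {k | ∀ hf : (Set.ofPred p).Finite, k < hf.toFinset.card} = Set.ofPred p := by
  by_cases hf : (Set.ofPred p).Finite
  · have : {k | ∀ hf : (Set.ofPred p).Finite, k < hf.toFinset.card} = Set.Iio hf.toFinset.card :=
      Set.ext fun k => ⟨fun hk => hk hf, fun hk _ => hk⟩
    rw [this, image_nth_Iio_card]
  · have : {k | ∀ hf : (Set.ofPred p).Finite, k < hf.toFinset.card} = Set.univ :=
      Set.eq_univ_of_forall fun k hf' => absurd hf' hf
    rw [this, Set.image_univ, range_nth_of_infinite hf]

open Ordinal in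
theorem exists_ordinal_natCast_lt_iff (p : ℕ → Prop) : ∃ lam : Ordinal, lam ≤ ω ∧
    ∀ k : ℕ, (k : Ordinal) < lam ↔ ∀ hf : (Set.ofPred p).Finite, k < hf.toFinset.card := by
  by_cases hf : (Set.ofPred p).Finite
  · exact ⟨hf.toFinset.card, (natCast_lt_omega0 _).le,
      fun k => Nat.cast_lt.trans ⟨fun hk _ => hk, fun hk => hk hf⟩⟩
  · exact ⟨ω, le_rfl, fun k => ⟨fun _ hf' => absurd hf' hf, fun _ => natCast_lt_omega0 k⟩⟩

end Nat

theorem Ideal.Quotient.mk_mem_nonZeroDivisors {A : Type*} [CommRing A] {I : Ideal A}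
    [I.IsPrime] {a : A} (ha : a ∉ I) : Ideal.Quotient.mk I a ∈ nonZeroDivisors (A ⧸ I) :=
  mem_nonZeroDivisors_of_ne_zero fun h => ha (Ideal.Quotient.eq_zero_iff_mem.1 h)

section RegularChain

variable {A : Type*} [CommRing A] {J : ℕ → Ideal A} {g : ℕ → A}

theorem eq_span_image_of_eq_sup_span (h0 : J 0 = ⊥)
    (hsucc : ∀ m, J (m + 1) = J m ⊔ Ideal.span {g m}) (m : ℕ) : J m = Ideal.span (g '' {j | j < m ∧ g j ∉ J j}) := by
  induction m with
  | zero => simp [h0]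
  | succ m ih =>
    rw [hsucc, ih]
    by_cases hm : g m ∈ J m
    · have hset : {j | j < m + 1 ∧ g j ∉ J j} = {j | j < m ∧ g j ∉ J j} := by
        ext j
        simp only [Set.mem_ofPred_eq]
        grind
      rw [hset, sup_eq_left, Ideal.span_le, Set.singleton_subset_iff, ← ih]
      exact hm
    · have hset : {j | j < m + 1 ∧ g j ∉ J j} = insert m {j | j < m ∧ g j ∉ J j} := by
        ext j
        simp only [Set.mem_ofPred_eq, Set.mem_insert_iff]
        grind
      rw [hset, Set.image_insert_eq, Ideal.span_insert, sup_comm]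

theorem exists_isRegularOrdSeq_span_eq_iSup (hprime : ∀ m, (J m).IsPrime) (h0 : J 0 = ⊥)
    (hsucc : ∀ m, J (m + 1) = J m ⊔ Ideal.span {g m}) :
    ∃ (lam : Ordinal) (x : Ordinal → A),
      IsRegularOrdSeq lam x ∧ Ideal.span (x '' {α | α < lam}) = ⨆ m, J m := by
  set P : ℕ → Prop := fun j => g j ∉ J j
  obtain ⟨lam, hlam, hlt⟩ := Nat.exists_ordinal_natCast_lt_iff P
  -- the `k`-th `g j` with `g j ∉ J j` sits at the ordinal `k`; infinite ordinals get junk values,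
  -- which are never read
  set x : Ordinal → A := fun α => g (Nat.nth P (Cardinal.toNat α.card))
  have hx (s : Set ℕ) : x '' (Nat.cast '' s) = g '' (Nat.nth P '' s) := by
    simp only [Set.image_image, x, Ordinal.card_nat, Cardinal.toNat_natCast]
  refine ⟨lam, x, fun α hα => ?_, ?_⟩
  · obtain ⟨k, rfl⟩ := Ordinal.lt_omega0.1 (hα.trans_le hlam)
    have hk := (hlt k).1 hα
    have hspan : Ideal.span (x '' {β | β < (k : Ordinal)}) = J (Nat.nth P k) := by
      rw [Ordinal.setOf_lt_eq_image_natCast (Ordinal.natCast_lt_omega0 k).le, hx]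
      simp only [Nat.cast_lt]
      change Ideal.span (g '' (Nat.nth P '' Set.Iio k)) = _
      rw [Nat.image_nth_Iio hk, eq_span_image_of_eq_sup_span h0 hsucc]
    have : (Ideal.span (x '' {β | β < (k : Ordinal)})).IsPrime := hspan ▸ hprime _
    have hxk : x k = g (Nat.nth P k) := by simp only [x, Ordinal.card_nat, Cardinal.toNat_natCast]
    exact Ideal.Quotient.mk_mem_nonZeroDivisors (hxk ▸ hspan ▸ Nat.nth_mem k hk)
  · have hvalid : {k : ℕ | (k : Ordinal) < lam} =
        {k | ∀ hf : (Set.ofPred P).Finite, k < hf.toFinset.card} := Set.ext hlt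
    rw [Ordinal.setOf_lt_eq_image_natCast hlam, hx, hvalid, Nat.image_nth_setOf_lt_card]
    refine le_antisymm (Ideal.span_le.2 ?_) (iSup_le fun m => ?_)
    · rintro _ ⟨j, -, rfl⟩
      refine Ideal.mem_iSup_of_mem (j + 1) ?_
      rw [hsucc]
      exact Ideal.mem_sup_right (Ideal.mem_span_singleton_self _)
    · rw [eq_span_image_of_eq_sup_span h0 hsucc m]
      exact Ideal.span_mono (Set.image_mono fun j hj => hj.2)

end RegularChain

theorem IsLocalization.isPrincipalIdealRing {R S : Type*} [CommRing R] [CommRing S] [Algebra R S]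
    (M : Submonoid R) [IsLocalization M S] [IsPrincipalIdealRing R] : IsPrincipalIdealRing S := by
  refine ⟨fun I => ?_⟩
  obtain ⟨a, ha⟩ := (IsPrincipalIdealRing.principal (I.under R)).principal
  refine ⟨algebraMap R S a, ?_⟩
  rw [← IsLocalization.map_under M S I, ha, Ideal.submodule_span_eq, Ideal.map_span,
    Set.image_singleton]

theorem IsLocalization.map_eq_map_sup_span {R S : Type*} [CommRing R] [CommRing S] [Algebra R S]
    (M : Submonoid R) [IsLocalization M S] {I I' : Ideal R} {g : R} (hle : I ≤ I') (hg : g ∈ I')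
    (h : ∀ f ∈ I', ∃ s ∈ M, ∃ t, s * f - g * t ∈ I) :
    I'.map (algebraMap R S) = I.map (algebraMap R S) ⊔ Ideal.span {algebraMap R S g} := by
  refine le_antisymm (Ideal.map_le_iff_le_comap.2 fun f hf => ?_)
    (sup_le (Ideal.map_mono hle) (Ideal.span_le.2 (by simpa using Ideal.mem_map_of_mem _ hg)))
  obtain ⟨s, hs, t, hst⟩ := h f hf
  rw [Ideal.mem_comap, ← Ideal.unit_mul_mem_iff_mem _ (IsLocalization.map_units S ⟨s, hs⟩)]
  have hsf : s * f = (s * f - g * t) + g * t := by ring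
  rw [← map_mul, hsf, map_add, map_mul]
  exact add_mem (Ideal.mem_sup_left (Ideal.mem_map_of_mem _ hst))
    (Ideal.mem_sup_right (Ideal.mul_mem_right _ _ (Ideal.mem_span_singleton_self _)))

theorem MvPolynomial.ker_map_of_eq_span {R S σ : Type*} [CommRing R] [CommRing S] {f : R →+* S}
    {a : R} (h : RingHom.ker f = Ideal.span {a}) :
    RingHom.ker (map f : MvPolynomial σ R →+* MvPolynomial σ S) = Ideal.span {C a} := by
  rw [ker_map, h, Ideal.map_span, Set.image_singleton]

theorem MvPolynomial.X_mem_supported_of_mem {R σ : Type*} [CommSemiring R] {s : Set σ} {i : σ}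
    (hi : i ∈ s) : (X i : MvPolynomial σ R) ∈ supported R s :=
  Algebra.subset_adjoin ⟨i, hi, rfl⟩

def Nat.subtypeLeEquivOption (n : ℕ) : {i : ℕ // n ≤ i} ≃ Option {i : ℕ // n + 1 ≤ i} where
  toFun i := if h : i.1 = n then none else some ⟨i.1, Nat.lt_of_le_of_ne i.2 (Ne.symm h)⟩
  invFun o := o.elim ⟨n, le_rfl⟩ fun j => ⟨j.1, Nat.le_of_succ_le j.2⟩
  left_inv := by
    rintro ⟨i, hi⟩
    by_cases h : i = n <;> simp [h]
  right_inv := by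
    rintro (_ | ⟨j, hj⟩)
    · simp
    · simp [show j ≠ n by omega]

open MvPolynomial

attribute [local instance] RingHom.ker_isPrime

theorem exists_subfield_ringEquiv_residueField {R A : Type*} [CommRing R] [Field A]
    (η : R →+* A) : ∃ K : Subfield A, Set.range η ⊆ K ∧
      Nonempty (IsLocalRing.ResidueField (Localization.AtPrime (RingHom.ker η)) ≃+* K) := by
  let ηₚ : Localization.AtPrime (RingHom.ker η) →+* A :=
    IsLocalization.lift (M := (RingHom.ker η).primeCompl) fun s => isUnit_iff_ne_zero.2 s.2
  have hηₚ (r : R) : ηₚ (algebraMap R _ r) = η r := IsLocalization.lift_eq _ r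
  have hle : IsLocalRing.maximalIdeal _ ≤ RingHom.ker ηₚ := by
    rw [← Localization.AtPrime.map_eq_maximalIdeal, Ideal.map_le_iff_le_comap]
    intro r hr
    simpa [hηₚ] using hr
  let ψ : IsLocalRing.ResidueField (Localization.AtPrime (RingHom.ker η)) →+* A :=
    Ideal.Quotient.lift _ ηₚ hle
  refine ⟨ψ.fieldRange, ?_, ⟨ψ.rangeRestrictFieldEquiv⟩⟩
  rintro _ ⟨r, rfl⟩
  exact ⟨IsLocalRing.residue _ (algebraMap R _ r), hηₚ r⟩

noncomputable section Tower

variable {D A : Type*} [CommRing D] [Field A] (η : MvPolynomial ℕ D →+* A)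

def firstVarsField (n : ℕ) : Subfield A :=
  Subfield.closure (η '' supported D (Set.Iio n))

variable {η}

theorem firstVarsField_mono {m n : ℕ} (h : m ≤ n) : firstVarsField η m ≤ firstVarsField η n :=
  Subfield.closure_mono (Set.image_mono (supported_mono (Set.Iio_subset_Iio h)))

theorem apply_mem_firstVarsField {n : ℕ} {u : MvPolynomial ℕ D}
    (hu : u ∈ supported D (Set.Iio n)) : η u ∈ firstVarsField η n :=
  Subfield.subset_closure ⟨u, hu, rfl⟩

theorem exists_mul_eq_of_mem_firstVarsField {n : ℕ} {y : A} (hy : y ∈ firstVarsField η n) :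
    ∃ u v : MvPolynomial ℕ D, u ∈ supported D (Set.Iio n) ∧ v ∈ supported D (Set.Iio n) ∧
      η v ≠ 0 ∧ η v * y = η u := by
  have hclosure : Subring.closure (η '' supported D (Set.Iio n)) =
      (supported D (Set.Iio n)).toSubring.map η := by
    rw [← Subring.closure_eq ((supported D (Set.Iio n)).toSubring.map η), Subring.coe_map]
    rfl
  rw [firstVarsField, Subfield.mem_closure_iff, hclosure] at hy
  obtain ⟨_, ⟨u, hu, rfl⟩, _, ⟨v, hv, rfl⟩, rfl⟩ := hy
  -- `y = η u / η v`, which is `0` when `η v = 0`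
  by_cases hv0 : η v = 0
  · exact ⟨0, 1, zero_mem _, one_mem _, by simp, by simp [hv0]⟩
  · exact ⟨u, v, hu, hv, hv0, mul_div_cancel₀ _ hv0⟩

variable (η)

abbrev RestPoly (n : ℕ) := MvPolynomial {i : ℕ // n ≤ i} (firstVarsField η n)

def restrictCoeff (n : ℕ) : D →+* firstVarsField η n :=
  (η.comp C).codRestrict _ fun z =>
    apply_mem_firstVarsField ((supported D (Set.Iio n)).algebraMap_mem z)

def evalFirst (n : ℕ) : MvPolynomial ℕ D →+* RestPoly η n :=
  eval₂Hom (C.comp (restrictCoeff η n)) fun i => if h : n ≤ i then X ⟨i, h⟩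
      else C ⟨η (X i), apply_mem_firstVarsField (X_mem_supported_of_mem (not_le.1 h))⟩

def evalRest (n : ℕ) : RestPoly η n →+* A :=
  eval₂Hom (firstVarsField η n).subtype fun i => η (X i.1)

variable {η}

theorem evalFirst_C (n : ℕ) (z : D) : evalFirst η n (C z) = C (restrictCoeff η n z) := by
  simp [evalFirst]

theorem evalFirst_X_of_le {n i : ℕ} (h : n ≤ i) : evalFirst η n (X i) = X ⟨i, h⟩ := by
  simp [evalFirst, h]

theorem evalFirst_X_of_lt {n i : ℕ} (h : i < n) :
    evalFirst η n (X i) = C ⟨η (X i), apply_mem_firstVarsField (X_mem_supported_of_mem h)⟩ := by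
  simp [evalFirst, not_le.2 h]

theorem evalRest_comp_evalFirst (n : ℕ) : (evalRest η n).comp (evalFirst η n) = η := by
  refine ringHom_ext (fun z => by simp [evalFirst_C, evalRest, restrictCoeff]) fun i => ?_
  rcases le_or_gt n i with h | h
  · simp [evalFirst_X_of_le h, evalRest]
  · simp [evalFirst_X_of_lt h, evalRest]

theorem ker_evalFirst_le (n : ℕ) : RingHom.ker (evalFirst η n) ≤ RingHom.ker η := by
  intro f hf
  rw [RingHom.mem_ker] at hf ⊢
  rw [← evalRest_comp_evalFirst (η := η) n, RingHom.comp_apply, hf, map_zero]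

theorem evalFirst_of_mem_supported {n : ℕ} {u : MvPolynomial ℕ D}
    (hu : u ∈ supported D (Set.Iio n)) :
    evalFirst η n u = C ⟨η u, apply_mem_firstVarsField hu⟩ := by
  have hconst : evalFirst η n u ∈ (C : firstVarsField η n →+* RestPoly η n).range := by
    induction hu using Algebra.adjoin_induction with
    | mem x hx =>
      obtain ⟨i, hi, rfl⟩ := hx
      exact ⟨_, (evalFirst_X_of_lt hi).symm⟩
    | algebraMap z => exact ⟨_, (evalFirst_C n z).symm⟩
    | add x y _ _ hx hy => rw [map_add]; exact add_mem hx hy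
    | mul x y _ _ hx hy => rw [map_mul]; exact mul_mem hx hy
  obtain ⟨w, hw⟩ := hconst
  rw [← hw]
  congr 1
  ext
  have hval := congrArg (evalRest η n) hw
  rw [← RingHom.comp_apply (evalRest η n) (evalFirst η n), evalRest_comp_evalFirst] at hval
  simpa [evalRest] using hval

theorem exists_evalFirst_eq_mul (n : ℕ) (ω : RestPoly η n) :
    ∃ v g : MvPolynomial ℕ D, η v ≠ 0 ∧ evalFirst η n g = evalFirst η n v * ω := by
  induction ω using MvPolynomial.induction_on with
  | C y =>
    obtain ⟨u, v, hu, hv, hv0, huv⟩ := exists_mul_eq_of_mem_firstVarsField y.2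
    refine ⟨v, u, hv0, ?_⟩
    rw [evalFirst_of_mem_supported hu, evalFirst_of_mem_supported hv, ← map_mul]
    congr 1
    exact Subtype.ext huv.symm
  | add p q hp hq =>
    obtain ⟨v₁, g₁, hv₁, h₁⟩ := hp
    obtain ⟨v₂, g₂, hv₂, h₂⟩ := hq
    refine ⟨v₁ * v₂, v₂ * g₁ + v₁ * g₂, by simp [hv₁, hv₂], ?_⟩
    simp only [map_add, map_mul, h₁, h₂]
    ring
  | mul_X p j hp =>
    obtain ⟨v, g, hv, h⟩ := hp
    refine ⟨v, g * X j.1, hv, ?_⟩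
    rw [map_mul, h, evalFirst_X_of_le j.2, mul_assoc]

variable (η)

def evalNextCoeff (n : ℕ) : Polynomial (firstVarsField η n) →+* firstVarsField η (n + 1) :=
  Polynomial.eval₂RingHom (Subfield.inclusion (firstVarsField_mono n.le_succ))
    ⟨η (X n), apply_mem_firstVarsField (X_mem_supported_of_mem n.lt_succ_self)⟩

def restPolyEquiv (n : ℕ) :
    RestPoly η n ≃+* MvPolynomial {i : ℕ // n + 1 ≤ i} (Polynomial (firstVarsField η n)) :=
  ((renameEquiv _ (Nat.subtypeLeEquivOption n)).trans (optionEquivRight _ _)).toRingEquiv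

def evalNext (n : ℕ) : RestPoly η n →+* RestPoly η (n + 1) :=
  (map (evalNextCoeff η n)).comp (restPolyEquiv η n : RestPoly η n →+* _)

-- zero if `η (X n)` is transcendental over `firstVarsField η n`, otherwise an associate of its
-- minimal polynomial, evaluated at `X n`
def nextRelation (n : ℕ) : RestPoly η n :=
  (restPolyEquiv η n).symm
    (C (Submodule.IsPrincipal.generator (RingHom.ker (evalNextCoeff η n))))

variable {η}

theorem ker_evalNext (n : ℕ) : RingHom.ker (evalNext η n) = Ideal.span {nextRelation η n} := by
  rw [evalNext, ← RingHom.comap_ker,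
    ker_map_of_eq_span (Ideal.span_singleton_generator _).symm, Ideal.comap_coe, ← Ideal.map_symm,
    Ideal.map_span, Set.image_singleton]
  rfl

theorem evalNext_nextRelation (n : ℕ) : evalNext η n (nextRelation η n) = 0 := by
  rw [← RingHom.mem_ker, ker_evalNext]
  exact Ideal.mem_span_singleton_self _

theorem evalNext_C (n : ℕ) (y : firstVarsField η n) :
    evalNext η n (C y) = C (Subfield.inclusion (firstVarsField_mono n.le_succ) y) := by
  simp [evalNext, restPolyEquiv, evalNextCoeff]

theorem evalNext_X_self (n : ℕ) : evalNext η n (X ⟨n, le_rfl⟩) =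
    C ⟨η (X n), apply_mem_firstVarsField (X_mem_supported_of_mem n.lt_succ_self)⟩ := by
  simp [evalNext, restPolyEquiv, Nat.subtypeLeEquivOption, evalNextCoeff]

theorem evalNext_X_of_lt {n i : ℕ} (h : n + 1 ≤ i) :
    evalNext η n (X ⟨i, n.le_succ.trans h⟩) = X ⟨i, h⟩ := by
  simp [evalNext, restPolyEquiv, Nat.subtypeLeEquivOption, show i ≠ n by omega]

theorem evalFirst_succ (n : ℕ) : evalFirst η (n + 1) = (evalNext η n).comp (evalFirst η n) := by
  refine ringHom_ext (fun z => ?_) fun i => ?_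
  · rw [RingHom.comp_apply, evalFirst_C, evalFirst_C, evalNext_C]
    rfl
  · rw [RingHom.comp_apply]
    rcases lt_trichotomy i n with h | rfl | h
    · rw [evalFirst_X_of_lt h, evalFirst_X_of_lt (h.trans n.lt_succ_self), evalNext_C]
      rfl
    · rw [evalFirst_X_of_le le_rfl, evalFirst_X_of_lt i.lt_succ_self, evalNext_X_self]
    · rw [evalFirst_X_of_le h, evalFirst_X_of_le h.le, evalNext_X_of_lt h]

variable (η)

def kerChain : ℕ → Ideal (MvPolynomial ℕ D)
  | 0 => ⊥
  | n + 1 => RingHom.ker (evalFirst η n)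

variable {η}

theorem kerChain_le_ker : ∀ m, kerChain η m ≤ RingHom.ker η
  | 0 => bot_le
  | n + 1 => ker_evalFirst_le n

theorem kerChain_mono : ∀ m, kerChain η m ≤ kerChain η (m + 1)
  | 0 => bot_le
  | n + 1 => fun f (hf : evalFirst η n f = 0) => by
    change evalFirst η (n + 1) f = 0
    rw [evalFirst_succ, RingHom.comp_apply, hf, map_zero]

theorem kerChain_isPrime [IsDomain D] : ∀ m, (kerChain η m).IsPrime
  | 0 => Ideal.isPrime_bot
  | n + 1 => RingHom.ker_isPrime (evalFirst η n)

theorem iSup_kerChain : ⨆ m, kerChain η m = RingHom.ker η := by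
  refine le_antisymm (iSup_le kerChain_le_ker) fun f hf => ?_
  have hvars : f ∈ supported D (Set.Iio (f.vars.sup id + 1)) :=
    mem_supported.2 fun i hi => Nat.lt_succ_of_le (Finset.le_sup (f := id) hi)
  refine Ideal.mem_iSup_of_mem (f.vars.sup id + 2) ?_
  change evalFirst η _ f = 0
  rw [evalFirst_of_mem_supported hvars, C_eq_zero]
  exact Subtype.ext hf

variable [IsPrincipalIdealRing D]

theorem ker_evalFirst_zero : RingHom.ker (evalFirst η 0) =
    Ideal.span {C (Submodule.IsPrincipal.generator (RingHom.ker (restrictCoeff η 0)))} := by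
  have hfactor : evalFirst η 0 =
      (rename fun i => (⟨i, i.zero_le⟩ : {i : ℕ // 0 ≤ i})).toRingHom.comp
        (map (restrictCoeff η 0)) :=
    ringHom_ext (fun z => by simp [evalFirst_C]) fun i => by simp [evalFirst_X_of_le]
  rw [hfactor, RingHom.ker_comp_of_injective _
      (rename_injective _ fun i j h => congrArg Subtype.val h),
    ker_map_of_eq_span (Ideal.span_singleton_generator _).symm]

variable (η) in
def kerGen : ℕ → MvPolynomial ℕ D
  | 0 => C (Submodule.IsPrincipal.generator (RingHom.ker (restrictCoeff η 0)))
  | n + 1 => (exists_evalFirst_eq_mul n (nextRelation η n)).choose_spec.choose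

theorem exists_evalFirst_kerGen_succ (n : ℕ) : ∃ v, η v ≠ 0 ∧
    evalFirst η n (kerGen η (n + 1)) = evalFirst η n v * nextRelation η n :=
  ⟨_, (exists_evalFirst_eq_mul n (nextRelation η n)).choose_spec.choose_spec⟩

theorem kerGen_mem : ∀ m, kerGen η m ∈ kerChain η (m + 1)
  | 0 => by
    change _ ∈ RingHom.ker (evalFirst η 0)
    rw [ker_evalFirst_zero]
    exact Ideal.mem_span_singleton_self _
  | n + 1 => by
    obtain ⟨v, -, hgen⟩ := exists_evalFirst_kerGen_succ (η := η) n
    change evalFirst η (n + 1) _ = 0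
    rw [evalFirst_succ, RingHom.comp_apply, hgen, map_mul, evalNext_nextRelation, mul_zero]

theorem exists_mul_sub_kerGen_mul_mem {m : ℕ} {f : MvPolynomial ℕ D}
    (hf : f ∈ kerChain η (m + 1)) :
    ∃ s ∈ (RingHom.ker η).primeCompl, ∃ t, s * f - kerGen η m * t ∈ kerChain η m := by
  cases m with
  | zero =>
    change f ∈ RingHom.ker (evalFirst η 0) at hf
    rw [ker_evalFirst_zero, Ideal.mem_span_singleton'] at hf
    obtain ⟨t, rfl⟩ := hf
    exact ⟨1, one_mem _, t, by simp [kerGen, mul_comm]⟩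
  | succ n =>
    have hnext : evalFirst η n f ∈ RingHom.ker (evalNext η n) := by
      change evalFirst η (n + 1) f = 0 at hf
      rwa [evalFirst_succ] at hf
    rw [ker_evalNext, Ideal.mem_span_singleton'] at hnext
    obtain ⟨ω, hω⟩ := hnext
    obtain ⟨v, t, hv, ht⟩ := exists_evalFirst_eq_mul n ω
    obtain ⟨v', hv', hgen⟩ := exists_evalFirst_kerGen_succ (η := η) n
    refine ⟨v' * v, mul_mem hv' hv, t, ?_⟩
    change evalFirst η n _ = 0
    rw [map_sub, map_mul, map_mul, map_mul, ← hω, hgen, ht]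
    ring

variable (η) in
theorem exists_isRegularOrdSeq_span_eq_maximalIdeal [IsDomain D] :
    ∃ (lam : Ordinal) (x : Ordinal → Localization.AtPrime (RingHom.ker η)), IsRegularOrdSeq lam x ∧
      Ideal.span (x '' {α | α < lam}) = IsLocalRing.maximalIdeal _ := by
  let ι := algebraMap (MvPolynomial ℕ D) (Localization.AtPrime (RingHom.ker η))
  have hdisj (m : ℕ) : Disjoint ((RingHom.ker η).primeCompl : Set (MvPolynomial ℕ D))
      (kerChain η m : Set (MvPolynomial ℕ D)) :=
    Set.disjoint_left.2 fun _ hs hm => hs (kerChain_le_ker m hm)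
  obtain ⟨lam, x, hreg, hspan⟩ := exists_isRegularOrdSeq_span_eq_iSup
    (J := fun m => (kerChain η m).map ι) (g := fun m => ι (kerGen η m))
    (fun m => IsLocalization.isPrime_of_isPrime_disjoint _ _ _ (kerChain_isPrime m) (hdisj m))
    (Ideal.map_bot)
    (fun m => IsLocalization.map_eq_map_sup_span _ (kerChain_mono m) (kerGen_mem m)
      fun _ hf => exists_mul_sub_kerGen_mul_mem hf)
  refine ⟨lam, x, hreg, ?_⟩
  rw [hspan, ← Ideal.map_iSup, iSup_kerChain, Localization.AtPrime.map_eq_maximalIdeal]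

end Tower

theorem field_is_free_over_LRQ_general
    (Zh : Type) [CommRing Zh] [Algebra ℤ Zh] [IsLocalization.Away (2 : ℤ) Zh]
    (A₀ : Type) [Field A₀]
    (η : MvPolynomial ℕ Zh →+* A₀) :
    ∃ (S : Submonoid (MvPolynomial ℕ Zh)) (lam : Ordinal) (x : Ordinal → Localization S),
      IsRegularOrdSeq lam x ∧
      ∃ K : Subfield A₀, Set.range η ⊆ (K : Set A₀) ∧
        Nonempty ((Localization S ⧸ Ideal.span (x '' {α | α < lam})) ≃+* K) ∧
        Module.Free K A₀ := by
  have : IsDomain Zh := IsLocalization.Away.isDomain Zh (two_ne_zero : (2 : ℤ) ≠ 0)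
  have := IsLocalization.isPrincipalIdealRing (Submonoid.powers (2 : ℤ)) (S := Zh)
  obtain ⟨lam, x, hreg, hspan⟩ := exists_isRegularOrdSeq_span_eq_maximalIdeal η
  obtain ⟨K, hK, ⟨e⟩⟩ := exists_subfield_ringEquiv_residueField η
  exact ⟨(RingHom.ker η).primeCompl, lam, x, hreg, K, hK,
    ⟨(Ideal.quotEquivOfEq hspan).trans e⟩, Module.Free.of_divisionRing _ _⟩

/-- Let `R₀` be a polynomial ring in countably many variables over `ℤ[1/2]` (with `Zh` any
model of `ℤ[1/2]`), and `η : R₀ → A₀` a ring map into a field of characteristic `≠ 2`.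
Then there is a multiplicative set `S ⊆ R₀` and a regular sequence in `S⁻¹R₀` whose
quotient is isomorphic to a subfield `K` of `A₀` containing the image of `η`, and `A₀` is
a free `K`-module.  In particular `A₀` is free over a localised regular quotient of `R₀`. -/
theorem field_is_free_over_LRQ
    (Zh : Type) [CommRing Zh] [Algebra ℤ Zh] [IsLocalization.Away (2 : ℤ) Zh]
    (A₀ : Type) [Field A₀] (hchar : ringChar A₀ ≠ 2)
    (η : MvPolynomial ℕ Zh →+* A₀) :
    ∃ (S : Submonoid (MvPolynomial ℕ Zh)) (lam : Ordinal) (x : Ordinal → Localization S),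
      IsRegularOrdSeq lam x ∧
      ∃ K : Subfield A₀, Set.range η ⊆ (K : Set A₀) ∧
        Nonempty ((Localization S ⧸ Ideal.span (x '' {α | α < lam})) ≃+* K) ∧
        Module.Free K A₀ :=
  field_is_free_over_LRQ_general Zh A₀ η
end

section
/- Let R₀ be a commutative ring, T a multiplicative subset of an R₀-algebra A, and suppose B = (S⁻¹R₀)/I is a localised regular quotient of R₀. If A₀ is a localization of B at a multiplicative set, then A₀ is a localised regular quotient of R₀. -/
theorem IsRegularOrdSeq.isLocalization_algebraMap_comp {A A' : Type*} [CommRing A] [CommRing A']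
    [Algebra A A'] (M : Submonoid A) [IsLocalization M A'] {lam : Ordinal} {x : Ordinal → A}
    (hx : IsRegularOrdSeq lam x) : IsRegularOrdSeq lam (algebraMap A A' ∘ x) := by
  intro α hα
  let J := Ideal.span (x '' {β | β < α})
  suffices ∀ K : Ideal A', K = J.map (algebraMap A A') →
      Ideal.Quotient.mk K (algebraMap A A' (x α)) ∈ nonZeroDivisors (A' ⧸ K) from
    this _ (by rw [Set.image_comp, ← Ideal.map_span])
  rintro K rfl
  exact IsLocalization.nonZeroDivisors_le_comap (Algebra.algebraMapSubmonoid (A ⧸ J) M)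
    (A' ⧸ J.map (algebraMap A A')) (hx α hα)

theorem IsLocalization.sup_of_isUnit {R C : Type*} [CommSemiring R] [CommSemiring C]
    [Algebra R C] (M N : Submonoid R) [IsLocalization M C]
    (hN : ∀ n ∈ N, IsUnit (algebraMap R C n)) : IsLocalization (M ⊔ N) C :=
  have hMN : M ⊔ N ≤ (IsUnit.submonoid C).comap (algebraMap R C) :=
    sup_le (fun m hm ↦ map_units C ⟨m, hm⟩) hN
  of_le M _ le_sup_left fun _ hr ↦ hMN hr

theorem Ideal.Quotient.algebraMap_quotient_map_quotient_algebraMap {R₀ R R' : Type*}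
    [CommRing R₀] [CommRing R] [CommRing R'] [Algebra R₀ R] [Algebra R R'] [Algebra R₀ R']
    [IsScalarTower R₀ R R'] (I : Ideal R) (r : R₀) :
    algebraMap (R ⧸ I) (R' ⧸ I.map (algebraMap R R')) (Ideal.Quotient.mk I (algebraMap R₀ R r)) =
      Ideal.Quotient.mk _ (algebraMap R₀ R' r) := by
  rw [Ideal.Quotient.algebraMap_quotient_map_quotient, ← IsScalarTower.algebraMap_apply]

section InvertedSubmonoid

variable {R₀ : Type*} [CommRing R₀] {S : Submonoid R₀} {I : Ideal (Localization S)}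
  (T : Submonoid (Localization S ⧸ I))

def invertedSubmonoid : Submonoid R₀ :=
  (IsUnit.submonoid (Localization T)).comap (algebraMap R₀ (Localization T))

theorem le_invertedSubmonoid : S ≤ invertedSubmonoid T := fun s hs ↦
  ((IsLocalization.map_units (Localization S) ⟨s, hs⟩).map
    ((algebraMap _ (Localization T)).comp (Ideal.Quotient.mk I)) :)

theorem isUnit_algebraMap_of_mem {D : Type*} [CommRing D] [Algebra (Localization S ⧸ I) D]
    (hD : ∀ r ∈ invertedSubmonoid T,
      IsUnit (algebraMap _ D (Ideal.Quotient.mk I (algebraMap R₀ (Localization S) r))))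
    {t : Localization S ⧸ I} (ht : t ∈ T) : IsUnit (algebraMap _ D t) := by
  obtain ⟨a, rfl⟩ := Ideal.Quotient.mk_surjective t
  obtain ⟨⟨r, s⟩, rfl⟩ := IsLocalization.mk'_surjective S a
  have hfrac : Ideal.Quotient.mk I (IsLocalization.mk' (Localization S) r s) *
      Ideal.Quotient.mk I (algebraMap R₀ _ s) = Ideal.Quotient.mk I (algebraMap R₀ _ r) := by
    rw [← map_mul, IsLocalization.mk'_spec]
  have hr : r ∈ invertedSubmonoid T := by
    show IsUnit (algebraMap _ (Localization T) (Ideal.Quotient.mk I (algebraMap R₀ _ r)))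
    rw [← hfrac, map_mul]
    exact (IsLocalization.map_units (Localization T) (⟨_, ht⟩ : T)).mul
      ((IsLocalization.map_units (Localization S) s).map
        ((algebraMap _ (Localization T)).comp (Ideal.Quotient.mk I)))
  have hrD := hD r hr
  rw [← hfrac, map_mul] at hrD
  exact isUnit_of_mul_isUnit_left hrD

variable {R' : Type*} [CommRing R'] [Algebra R₀ R'] [IsLocalization (invertedSubmonoid T) R']
  [Algebra (Localization S) R'] [IsScalarTower R₀ (Localization S) R']

theorem exists_ringEquiv_localization_quotient_map :
    ∃ e : Localization T ≃+* R' ⧸ I.map (algebraMap (Localization S) R'),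
      e.toRingHom.comp ((algebraMap _ (Localization T)).comp
        ((Ideal.Quotient.mk I).comp (algebraMap R₀ (Localization S)))) =
      (Ideal.Quotient.mk _).comp (algebraMap R₀ R') := by
  have : IsLocalization ((invertedSubmonoid T).map (algebraMap R₀ (Localization S))) R' :=
    IsLocalization.isLocalization_of_submonoid_le _ _ S _ (le_invertedSubmonoid T)
  let D := R' ⧸ I.map (algebraMap (Localization S) R')
  have hunit (r : R₀) (hr : r ∈ invertedSubmonoid T) :
      IsUnit (algebraMap _ D (Ideal.Quotient.mk I (algebraMap R₀ (Localization S) r))) := by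
    rw [Ideal.Quotient.algebraMap_quotient_map_quotient_algebraMap]
    exact (IsLocalization.map_units R' ⟨r, hr⟩).map _
  let V := Algebra.algebraMapSubmonoid (Localization S ⧸ I)
    ((invertedSubmonoid T).map (algebraMap R₀ (Localization S)))
  have : IsLocalization (T ⊔ V) (Localization T) :=
    IsLocalization.sup_of_isUnit T V fun _ ⟨_, ⟨r, hr, hrv⟩, hv⟩ ↦ hv ▸ hrv ▸ hr
  have : IsLocalization (T ⊔ V) D := by
    rw [sup_comm]
    exact IsLocalization.sup_of_isUnit V T fun _ ↦ isUnit_algebraMap_of_mem T hunit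
  refine ⟨(IsLocalization.algEquiv (T ⊔ V) (Localization T) D).toRingEquiv, ?_⟩
  ext r
  simp only [RingHom.comp_apply, RingEquiv.toRingHom_eq_coe, RingHom.coe_coe,
    AlgEquiv.coe_ringEquiv, AlgEquiv.commutes]
  exact Ideal.Quotient.algebraMap_quotient_map_quotient_algebraMap I r

end InvertedSubmonoid

/-- A localization of a localised regular quotient is a localised regular quotient:
if `B = (S⁻¹R₀)/(x_α : α < λ)` with `(x_α)` regular, and `A₀ = T⁻¹B`, then there exist a
multiplicative set `S' ⊆ R₀` and a regular sequence `(x'_α : α < λ)` in `S'⁻¹R₀` with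
`A₀ ≅ (S'⁻¹R₀)/(x'_α)` as `R₀`-algebras. -/
theorem localization_of_lrq_is_lrq {R₀ : Type*} [CommRing R₀] (S : Submonoid R₀)
    (lam : Ordinal) (x : Ordinal → Localization S) (hx : IsRegularOrdSeq lam x)
    (T : Submonoid (Localization S ⧸ Ideal.span (x '' {α | α < lam}))) :
    ∃ (S' : Submonoid R₀) (x' : Ordinal → Localization S'),
      IsRegularOrdSeq lam x' ∧
      ∃ e : Localization T ≃+* (Localization S' ⧸ Ideal.span (x' '' {α | α < lam})),
        e.toRingHom.comp ((algebraMap _ (Localization T)).comp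
          ((Ideal.Quotient.mk (Ideal.span (x '' {α | α < lam}))).comp
            (algebraMap R₀ (Localization S)))) =
        (Ideal.Quotient.mk (Ideal.span (x' '' {α | α < lam}))).comp
          (algebraMap R₀ (Localization S')) := by
  let S' := invertedSubmonoid T
  have hSS' := le_invertedSubmonoid T
  let : Algebra (Localization S) (Localization S') :=
    IsLocalization.localizationAlgebraOfSubmonoidLe _ _ S S' hSS'
  have : IsScalarTower R₀ (Localization S) (Localization S') :=
    IsLocalization.localization_isScalarTower_of_submonoid_le _ _ S S' hSS'
  have : IsLocalization (S'.map (algebraMap R₀ (Localization S))) (Localization S') :=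
    IsLocalization.isLocalization_of_submonoid_le _ _ S S' hSS'
  refine ⟨S', algebraMap _ _ ∘ x, hx.isLocalization_algebraMap_comp (S'.map (algebraMap _ _)), ?_⟩
  have hspan : Ideal.span ((algebraMap _ (Localization S') ∘ x) '' {α | α < lam}) =
      (Ideal.span (x '' {α | α < lam})).map (algebraMap _ _) := by
    rw [Set.image_comp, Ideal.map_span]
  rw [hspan]
  exact exists_ringEquiv_localization_quotient_map T
end
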